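/- arXiv:math/0205166 — 7 statements merged into one kernel-verified Lean document; each statement's English description precedes it below -/
import Mathlib

section
/- Let G be a directed graph and g a graph trace on G. Then the set H := {v ∈ G⁰ : g(v) = 0} is a saturated hereditary subset of G⁰. -/
/-- A directed graph: countable sets of vertices and edges with range and source maps. -/
structure DirGraph where
  V : Type
  E : Type
  countV : Countable V
  countE : Countable E
  r : E → V
  s : E → V

attribute [instance] DirGraph.countV DirGraph.countE

/-- `g : G⁰ → [0,∞)` is a graph trace if (1) for every vertex emitting a finite nonzero
number of edges, `g v = ∑_{s(e)=v} g (r e)`, and (2) for every infinite emitter `v` and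
every finite set of edges emitted by `v`, `∑ g (r eᵢ) ≤ g v`. -/
def DirGraph.IsGraphTrace (G : DirGraph) (g : G.V → NNReal) : Prop :=
  (∀ v : G.V, ({e : G.E | G.s e = v}).Finite → ({e : G.E | G.s e = v}).Nonempty →
      g v = ∑ᶠ e ∈ {e : G.E | G.s e = v}, g (G.r e)) ∧
  (∀ v : G.V, ({e : G.E | G.s e = v}).Infinite →
      ∀ F : Finset G.E, (∀ e ∈ F, G.s e = v) → ∑ e ∈ F, g (G.r e) ≤ g v)

/-- `v ≥ w` : there is a directed path (possibly of length zero) from `v` to `w`. -/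
def DirGraph.Reaches (G : DirGraph) : G.V → G.V → Prop :=
  Relation.ReflTransGen (fun a b => ∃ e : G.E, G.s e = a ∧ G.r e = b)

/-- `L(v)`, the set of vertices that can reach `v`. -/
def DirGraph.L (G : DirGraph) (v : G.V) : Set G.V := {w : G.V | G.Reaches w v}

/-- A vertex is left infinite if `L(v)` is infinite. -/
def DirGraph.LeftInfinite (G : DirGraph) (v : G.V) : Prop := (G.L v).Infinite

/-- A vertex lies on a loop iff there is a directed path of length at least one
from it back to itself. -/
def DirGraph.OnLoop (G : DirGraph) (v : G.V) : Prop :=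
  ∃ e : G.E, G.s e = v ∧ G.Reaches (G.r e) v

/-- A set of vertices is hereditary if it is closed under ranges of edges. -/
def DirGraph.Hereditary (G : DirGraph) (H : Set G.V) : Prop :=
  ∀ e : G.E, G.s e ∈ H → G.r e ∈ H

/-- A set of vertices is saturated if it contains every vertex emitting a finite
nonzero number of edges all of whose ranges lie in the set. -/
def DirGraph.Saturated (G : DirGraph) (H : Set G.V) : Prop :=
  ∀ v : G.V, ({e : G.E | G.s e = v}).Finite → ({e : G.E | G.s e = v}).Nonempty →
    (∀ e : G.E, G.s e = v → G.r e ∈ H) → v ∈ H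

/-- The norm `‖g‖ = ∑_{v} g v` of a function on the vertices, as an extended real. -/
noncomputable def DirGraph.traceNorm (G : DirGraph) (g : G.V → NNReal) : ENNReal :=
  ∑' v : G.V, (g v : ENNReal)


/-- If `g` is a graph trace on `G`, then `{v : g v = 0}` is saturated and hereditary. -/
theorem zeroSet_saturated_hereditary (G : DirGraph) (g : G.V → NNReal)
    (hg : G.IsGraphTrace g) :
    G.Hereditary {v : G.V | g v = 0} ∧ G.Saturated {v : G.V | g v = 0} := by
  obtain ⟨h1, h2⟩ := hg
  constructor
  · intro e he
    simp only [Set.mem_setOf_eq] at he ⊢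
    by_cases hfin : ({e' : G.E | G.s e' = G.s e}).Finite
    · have hne : ({e' : G.E | G.s e' = G.s e}).Nonempty := ⟨e, rfl⟩
      have := h1 (G.s e) hfin hne
      rw [he] at this
      have hsum : ∑ e' ∈ hfin.toFinset, g (G.r e') = 0 := by
        rw [← finsum_mem_coe_finset]
        simpa [hfin.coe_toFinset] using this.symm
      have := Finset.sum_eq_zero_iff.mp hsum e (by simp [hfin.mem_toFinset])
      exact this
    · have := h2 (G.s e) hfin {e} (by simp)
      simp only [Finset.sum_singleton, he, le_zero_iff] at this
      exact this
  · intro v hfin hne hall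
    simp only [Set.mem_setOf_eq]
    rw [h1 v hfin hne]
    apply finsum_mem_eq_zero_of_forall_eq_zero
    intro e he
    exact hall e he
end

section
/- Let G be a directed graph and g a graph trace on G that is bounded, i.e., ‖g‖ := Σ_{v ∈ G⁰} g(v) < ∞. If a vertex v ∈ G⁰ is left infinite, then g(v) = 0. -/
/-! A graph trace does not increase along edges, so `g w ≥ g v` for every `w ∈ L(v)`. A
convergent sum has only finitely many terms above a positive threshold, hence `g v = 0` when
`L(v)` is infinite. -/

namespace DirGraph.IsGraphTrace

variable {G : DirGraph} {g : G.V → NNReal}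

theorem le_source (hg : G.IsGraphTrace g) (e : G.E) : g (G.r e) ≤ g (G.s e) := by
  by_cases hfin : {e' : G.E | G.s e' = G.s e}.Finite
  · rw [hg.1 _ hfin ⟨e, rfl⟩, finsum_mem_eq_finite_toFinset_sum _ hfin]
    exact Finset.single_le_sum (f := fun e' => g (G.r e')) (fun _ _ => zero_le)
      (hfin.mem_toFinset.mpr rfl)
  · simpa using hg.2 _ hfin {e} (by simp)

theorem le_of_reaches (hg : G.IsGraphTrace g) {w u : G.V} (hwu : G.Reaches w u) :
    g u ≤ g w := by
  induction hwu using Relation.ReflTransGen.head_induction_on with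
  | refl => exact le_rfl
  | head hedge _ ih =>
    obtain ⟨e, rfl, rfl⟩ := hedge
    exact ih.trans (hg.le_source e)

end DirGraph.IsGraphTrace

/-- If `g` is a bounded graph trace on `G` and `v` is left infinite, then `g v = 0`. -/
theorem graphTrace_eq_zero_of_leftInfinite (G : DirGraph) (g : G.V → NNReal)
    (hg : G.IsGraphTrace g) (hbdd : G.traceNorm g < ⊤)
    (v : G.V) (hv : G.LeftInfinite v) : g v = 0 := by
  by_contra hv0
  have hlarge : {w : G.V | (g v : ENNReal) ≤ g w}.Finite :=
    ENNReal.finite_const_le_of_tsum_ne_top hbdd.ne (by exact_mod_cast hv0)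
  exact hv (hlarge.subset fun w hw => by exact_mod_cast hg.le_of_reaches hw)
end

section
/- Let G be a directed graph with no sources (every vertex receives at least one edge) in which every vertex lying on a loop is left infinite. Then every vertex of G is left infinite. -/
/-- In a graph with no sources in which every vertex lying on a loop is left infinite,
every vertex is left infinite. -/
theorem all_leftInfinite (G : DirGraph)
    (hns : ∀ v : G.V, ∃ e : G.E, G.r e = v)
    (hloops : ∀ v : G.V, G.OnLoop v → G.LeftInfinite v)
    (v : G.V) : G.LeftInfinite v := by
  choose e he using hns
  -- backward path: f 0 = v, f (n+1) = source of an edge into f n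
  let f : ℕ → G.V := fun n => Nat.rec v (fun _ w => G.s (e w)) n
  have hf0 : f 0 = v := rfl
  have hfs : ∀ n, f (n + 1) = G.s (e (f n)) := fun n => rfl
  have hstep : ∀ n, G.Reaches (f (n + 1)) (f n) := by
    intro n
    exact Relation.ReflTransGen.single ⟨e (f n), (hfs n).symm, he (f n)⟩
  have hreach : ∀ i j, i ≤ j → G.Reaches (f j) (f i) := by
    intro i j hij
    induction j with
    | zero => cases Nat.le_zero.mp hij; exact Relation.ReflTransGen.refl
    | succ k ih =>
      rcases Nat.lt_or_ge i (k + 1) with h | h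
      · exact (hstep k).trans (ih (Nat.lt_succ_iff.mp h))
      · cases Nat.le_antisymm hij h; exact Relation.ReflTransGen.refl
  have hreachv : ∀ n, G.Reaches (f n) v := by
    intro n
    rw [← hf0]; exact hreach 0 n (Nat.zero_le n)
  by_cases hinj : Function.Injective f
  · exact Set.infinite_of_injective_forall_mem hinj hreachv
  · -- f repeats, so some f j lies on a loop
    rw [Function.not_injective_iff] at hinj
    obtain ⟨a, b, hab, hne⟩ := hinj
    wlog hlt : a < b generalizing a b
    · exact this b a hab.symm hne.symm (by omega)
    obtain ⟨k, rfl⟩ : ∃ k, b = k + 1 := ⟨b - 1, by omega⟩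
    have hloop : G.OnLoop (f (k + 1)) := by
      refine ⟨e (f k), (hfs k).symm, ?_⟩
      rw [he (f k), ← hab]
      exact hreach a k (by omega)
    have hinf := hloops _ hloop
    refine hinf.mono ?_
    intro w hw
    exact Relation.ReflTransGen.trans hw (hreachv (k + 1))
end

section
/- Let G be a directed graph, let g be a graph trace on G, and let H := {v ∈ G⁰ : g(v) = 0}. Define g̃ on the vertices of the quotient graph G_{(H,∅)} by: g̃(w) := g(w) for w ∈ (G⁰ ∖ H) ∖ B_H; g̃(w) := Σ_{e : s(e)=w, r(e)∉H} g(r(e)) for w ∈ B_H; and g̃(v′) := g(v) − Σ_{e : s(e)=v, r(e)∉H} g(r(e)) for the primed copy v′ of v ∈ B_H. Then g̃ is a graph trace on G_{(H,∅)} and ‖g̃‖ = ‖g‖. -/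
/-- The set `B_H` of infinite emitters `v` such that a finite, nonzero number of edges
from `v` have range outside `H`. -/
def DirGraph.BH (G : DirGraph) (H : Set G.V) : Set G.V :=
  {v : G.V | ({e : G.E | G.s e = v}).Infinite ∧
    ({e : G.E | G.s e = v ∧ G.r e ∉ H}).Finite ∧
    ({e : G.E | G.s e = v ∧ G.r e ∉ H}).Nonempty}

/-- The quotient graph `G_{(H,∅)}` for a hereditary set `H`:  its vertices are the
vertices of `G` outside `H` together with a primed copy `v'` of each `v ∈ B_H`, and its
edges are the edges of `G` with range outside `H` together with a primed copy `e'` of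
each edge with range in `B_H`; a primed edge `e'` has source `s e` and range `(r e)'`. -/
def DirGraph.quot (G : DirGraph) (H : Set G.V) (hH : G.Hereditary H) : DirGraph where
  V := {v : G.V // v ∉ H} ⊕ {v : G.V // v ∈ G.BH H}
  E := {e : G.E // G.r e ∉ H} ⊕ {e : G.E // G.r e ∈ G.BH H}
  countV := inferInstance
  countE := inferInstance
  r := Sum.elim (fun e => Sum.inl ⟨G.r e.1, e.2⟩) (fun e => Sum.inr ⟨G.r e.1, e.2⟩)
  s := Sum.elim
    (fun e => Sum.inl ⟨G.s e.1, fun hs => e.2 (hH e.1 hs)⟩)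
    (fun e => Sum.inl ⟨G.s e.1, fun hs => by
      obtain ⟨f, hf, hrf⟩ := e.2.2.2
      exact hrf (hH f (hf ▸ hH e.1 hs))⟩)

open scoped Classical in
/-- The function `g̃` induced on the vertices of the quotient graph `G_{(H,∅)}` by a
function `g` on the vertices of `G`:  it is `g w` on unprimed vertices outside `B_H`,
`∑_{s(e) = w, r(e) ∉ H} g (r e)` on unprimed vertices of `B_H`, and
`g v - ∑_{s(e) = v, r(e) ∉ H} g (r e)` on the primed copy `v'` of `v ∈ B_H`. -/
noncomputable def DirGraph.gtilde (G : DirGraph) (H : Set G.V) (hH : G.Hereditary H)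
    (g : G.V → NNReal) : (G.quot H hH).V → NNReal :=
  Sum.elim
    (fun w => if w.1 ∈ G.BH H then
        ∑ᶠ e ∈ {e : G.E | G.s e = w.1 ∧ G.r e ∉ H}, g (G.r e)
      else g w.1)
    (fun v => g v.1 - ∑ᶠ e ∈ {e : G.E | G.s e = v.1 ∧ G.r e ∉ H}, g (G.r e))

/-!
Every edge `e` of `G` with `r e ∉ H` has one copy in `G_{(H,∅)}`, and a second one when
`r e ∈ B_H`; `g̃` splits `g (r e)` between the ranges of these copies, which is possible because
`∑_{s f = v, r f ∉ H} g (r f) ≤ g v` for an infinite emitter `v`. Hence the sum of `g̃` over the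
edges a vertex emits in the quotient is the sum of `g` over the corresponding edges of `G`.
Since `g` vanishes on `H`, the edges into `H` and the vertices of `H` carry no mass, which gives
both the trace conditions for `g̃` and `‖g̃‖ = ‖g‖`.
-/

namespace DirGraph

open scoped Classical ENNReal

variable {G : DirGraph} {H : Set G.V} {g : G.V → NNReal}

theorem IsGraphTrace.hereditary_zero (hg : G.IsGraphTrace g) :
    G.Hereditary {v : G.V | g v = 0} := by
  intro e he
  by_cases hfin : {f : G.E | G.s f = G.s e}.Finite
  · have hsum := hg.1 _ hfin ⟨e, rfl⟩
    rw [finsum_mem_eq_finite_toFinset_sum _ hfin, he] at hsum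
    exact Finset.sum_eq_zero_iff.mp hsum.symm e (hfin.mem_toFinset.mpr rfl)
  · have hle := hg.2 _ hfin {e} (by simp)
    rw [Finset.sum_singleton, he] at hle
    exact le_antisymm hle zero_le

theorem notMem_of_mem_BH (hH : G.Hereditary H) {v : G.V} (hv : v ∈ G.BH H) : v ∉ H := by
  obtain ⟨-, -, f, rfl, hf⟩ := hv
  exact fun hs => hf (hH f hs)

variable (G H g) in
noncomputable def outSum (v : G.V) : NNReal :=
  ∑ᶠ e ∈ {e : G.E | G.s e = v ∧ G.r e ∉ H}, g (G.r e)

theorem IsGraphTrace.outSum_le (hg : G.IsGraphTrace g) {v : G.V} (hv : v ∈ G.BH H) :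
    G.outSum H g v ≤ g v := by
  obtain ⟨hinf, hfin, -⟩ := hv
  rw [outSum, finsum_mem_eq_finite_toFinset_sum _ hfin]
  exact hg.2 v hinf _ fun e he => (hfin.mem_toFinset.mp he).1

theorem IsGraphTrace.eq_outSum (hg : G.IsGraphTrace g) (hH0 : ∀ v ∈ H, g v = 0) {v : G.V}
    (hfin : {e : G.E | G.s e = v}.Finite) (hne : {e : G.E | G.s e = v}.Nonempty) :
    g v = G.outSum H g v := by
  rw [hg.1 v hfin hne, outSum]
  refine finsum_mem_inter_support_eq _ _ _ (Set.ext fun e => ?_)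
  simp only [Set.mem_inter_iff, Set.mem_ofPred_eq, Function.mem_support]
  exact ⟨fun ⟨hs, hr⟩ => ⟨⟨hs, fun hH => hr (hH0 _ hH)⟩, hr⟩, fun ⟨⟨hs, _⟩, hr⟩ => ⟨hs, hr⟩⟩

variable (hH : G.Hereditary H)

@[simp]
theorem quot_r_inl (e : {e : G.E // G.r e ∉ H}) :
    (G.quot H hH).r (Sum.inl e) = Sum.inl ⟨G.r e.1, e.2⟩ := rfl

@[simp]
theorem quot_r_inr (e : {e : G.E // G.r e ∈ G.BH H}) :
    (G.quot H hH).r (Sum.inr e) = Sum.inr ⟨G.r e.1, e.2⟩ := rfl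

@[simp]
theorem gtilde_inl (w : {v : G.V // v ∉ H}) :
    G.gtilde H hH g (Sum.inl w) = if w.1 ∈ G.BH H then G.outSum H g w.1 else g w.1 := rfl

@[simp]
theorem gtilde_inr (v : {v : G.V // v ∈ G.BH H}) :
    G.gtilde H hH g (Sum.inr v) = g v.1 - G.outSum H g v.1 := rfl

def baseEdge : (G.quot H hH).E → G.E :=
  Sum.elim Subtype.val Subtype.val

theorem r_baseEdge_notMem (x : (G.quot H hH).E) : G.r (G.baseEdge hH x) ∉ H := by
  rcases x with e | e
  exacts [e.2, notMem_of_mem_BH hH e.2]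

theorem quot_s_eq_inl_iff (x : (G.quot H hH).E) {w : G.V} (hw : w ∉ H) :
    (G.quot H hH).s x = Sum.inl ⟨w, hw⟩ ↔ G.s (G.baseEdge hH x) = w := by
  rcases x with e | e <;> simp [quot, baseEdge]

theorem quot_s_ne_inr (x : (G.quot H hH).E) (v : {v : G.V // v ∈ G.BH H}) :
    (G.quot H hH).s x ≠ Sum.inr v := by
  rcases x with e | e <;> simp [quot]

noncomputable def liftEdges (A : Finset G.E) : Finset (G.quot H hH).E :=
  (A.subtype fun e => G.r e ∉ H).disjSum (A.subtype fun e => G.r e ∈ G.BH H)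

theorem mem_liftEdges {A : Finset G.E} {x : (G.quot H hH).E} :
    x ∈ G.liftEdges hH A ↔ G.baseEdge hH x ∈ A := by
  rcases x with e | e
  exacts [Finset.inl_mem_disjSum.trans Finset.mem_subtype,
    Finset.inr_mem_disjSum.trans Finset.mem_subtype]

theorem IsGraphTrace.sum_liftEdges (hg : G.IsGraphTrace g) {A : Finset G.E}
    (hA : ∀ e ∈ A, G.r e ∉ H) :
    ∑ x ∈ G.liftEdges hH A, G.gtilde H hH g ((G.quot H hH).r x) = ∑ e ∈ A, g (G.r e) := by
  refine (Finset.sum_disjSum _ _ _).trans ?_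
  simp only [quot_r_inl, quot_r_inr, gtilde_inl, gtilde_inr]
  rw [Finset.sum_subtype_eq_sum_filter (fun e => if G.r e ∈ G.BH H then G.outSum H g (G.r e)
      else g (G.r e)), Finset.sum_subtype_eq_sum_filter (fun e => g (G.r e) - G.outSum H g (G.r e)),
    Finset.filter_true_of_mem hA, Finset.sum_filter, ← Finset.sum_add_distrib]
  refine Finset.sum_congr rfl fun e _ => ?_
  split_ifs with hBH
  · exact add_tsub_cancel_of_le (hg.outSum_le hBH)
  · exact add_zero _

theorem quot_outEdges_eq {w : G.V} (hw : w ∉ H) :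
    {x : (G.quot H hH).E | (G.quot H hH).s x = Sum.inl ⟨w, hw⟩} =
      G.baseEdge hH ⁻¹' {e : G.E | G.s e = w ∧ G.r e ∉ H} := by
  ext x
  simp only [Set.mem_ofPred_eq, Set.mem_preimage, quot_s_eq_inl_iff, r_baseEdge_notMem,
    not_false_eq_true, and_true]

theorem finite_quot_outEdges_iff {w : G.V} (hw : w ∉ H) :
    {x : (G.quot H hH).E | (G.quot H hH).s x = Sum.inl ⟨w, hw⟩}.Finite ↔
      {e : G.E | G.s e = w ∧ G.r e ∉ H}.Finite := by
  rw [quot_outEdges_eq hH hw]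
  refine ⟨fun h => ?_, fun h => ?_⟩
  · refine (h.image (G.baseEdge hH)).subset fun e he => ?_
    exact ⟨Sum.inl ⟨e, he.2⟩, he, rfl⟩
  · refine (G.liftEdges hH h.toFinset).finite_toSet.subset fun x hx => ?_
    exact (mem_liftEdges hH).mpr (h.mem_toFinset.mpr hx)

theorem IsGraphTrace.quot_finsum_outEdges (hg : G.IsGraphTrace g) {w : G.V} (hw : w ∉ H)
    (hfin : {e : G.E | G.s e = w ∧ G.r e ∉ H}.Finite) :
    ∑ᶠ x ∈ {x : (G.quot H hH).E | (G.quot H hH).s x = Sum.inl ⟨w, hw⟩},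
      G.gtilde H hH g ((G.quot H hH).r x) = G.outSum H g w := by
  have hlift : {x : (G.quot H hH).E | (G.quot H hH).s x = Sum.inl ⟨w, hw⟩} =
      ↑(G.liftEdges hH hfin.toFinset) := by
    ext x
    rw [quot_outEdges_eq hH hw, Finset.mem_coe, mem_liftEdges, hfin.mem_toFinset]
    rfl
  rw [hlift, finsum_mem_coe_finset, hg.sum_liftEdges hH fun e he => (hfin.mem_toFinset.mp he).2,
    outSum, finsum_mem_eq_finite_toFinset_sum _ hfin]

theorem IsGraphTrace.quot_isGraphTrace (hg : G.IsGraphTrace g) (hH0 : ∀ v ∈ H, g v = 0) :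
    (G.quot H hH).IsGraphTrace (G.gtilde H hH g) := by
  refine ⟨?_, ?_⟩
  · rintro (⟨w, hw⟩ | v) hfin ⟨x, hx⟩
    · have hfinA := (finite_quot_outEdges_iff hH hw).mp hfin
      have hneA : {e : G.E | G.s e = w ∧ G.r e ∉ H}.Nonempty := by
        rw [Set.mem_ofPred_eq, quot_s_eq_inl_iff] at hx
        exact ⟨_, hx, r_baseEdge_notMem hH x⟩
      rw [hg.quot_finsum_outEdges hH hw hfinA, gtilde_inl]
      split_ifs with hBH
      · rfl
      · have hfinG : {e : G.E | G.s e = w}.Finite := by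
          by_contra hinf
          exact hBH ⟨hinf, hfinA, hneA⟩
        exact hg.eq_outSum hH0 hfinG (hneA.mono fun e he => he.1)
    · exact (quot_s_ne_inr hH x v hx).elim
  · rintro (⟨w, hw⟩ | v) hinf F hF
    · have hinfA : {e : G.E | G.s e = w ∧ G.r e ∉ H}.Infinite :=
        fun h => hinf ((finite_quot_outEdges_iff hH hw).mpr h)
      have hBH : w ∉ G.BH H := fun h => hinfA h.2.1
      have hsub : F ⊆ G.liftEdges hH (F.image (G.baseEdge hH)) := fun x hx =>
        (mem_liftEdges hH).mpr (Finset.mem_image_of_mem _ hx)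
      rw [gtilde_inl, if_neg hBH]
      calc ∑ x ∈ F, G.gtilde H hH g ((G.quot H hH).r x)
          ≤ ∑ x ∈ G.liftEdges hH (F.image (G.baseEdge hH)),
              G.gtilde H hH g ((G.quot H hH).r x) := Finset.sum_le_sum_of_subset hsub
        _ = ∑ e ∈ F.image (G.baseEdge hH), g (G.r e) := by
            refine hg.sum_liftEdges hH fun e he => ?_
            obtain ⟨x, -, rfl⟩ := Finset.mem_image.mp he
            exact r_baseEdge_notMem hH x
        _ ≤ g w := by
            refine hg.2 w (hinfA.mono fun e he => he.1) _ fun e he => ?_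
            obtain ⟨x, hx, rfl⟩ := Finset.mem_image.mp he
            exact (quot_s_eq_inl_iff hH x hw).mp (hF x hx)
    · refine (hinf (Set.finite_empty.subset fun x hx => ?_)).elim
      exact quot_s_ne_inr hH x v hx

theorem IsGraphTrace.traceNorm_gtilde (hg : G.IsGraphTrace g) (hH0 : ∀ v ∈ H, g v = 0) :
    (G.quot H hH).traceNorm (G.gtilde H hH g) = G.traceNorm g := by
  refine (Summable.tsum_sum ENNReal.summable ENNReal.summable).trans ?_
  refine (congrArg₂ (· + ·)
    (tsum_subtype Hᶜ fun v => ((if v ∈ G.BH H then G.outSum H g v else g v : NNReal) : ℝ≥0∞))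
    (tsum_subtype (G.BH H) fun v => ((g v - G.outSum H g v : NNReal) : ℝ≥0∞))).trans ?_
  rw [← ENNReal.tsum_add]
  refine tsum_congr fun v => ?_
  by_cases hvH : v ∈ H
  · have hvBH : v ∉ G.BH H := fun h => notMem_of_mem_BH hH h hvH
    simp [hvH, hvBH, hH0 v hvH]
  · by_cases hvBH : v ∈ G.BH H
    · simp only [Set.indicator_of_mem (show v ∈ Hᶜ from hvH),
        Set.indicator_of_mem hvBH, if_pos hvBH]
      rw [← ENNReal.coe_add, add_tsub_cancel_of_le (hg.outSum_le hvBH)]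
    · simp [hvH, hvBH]

end DirGraph

/-- For a graph trace `g` on `G` with `H = {v : g v = 0}` (a saturated hereditary set),
the induced function `g̃` is a graph trace on the quotient graph `G_{(H,∅)}` and has the
same norm as `g`. -/
theorem gtilde_isGraphTrace_and_norm_eq (G : DirGraph) (g : G.V → NNReal)
    (hg : G.IsGraphTrace g) :
    ∃ hH : G.Hereditary {v : G.V | g v = 0},
      (G.quot {v : G.V | g v = 0} hH).IsGraphTrace (G.gtilde {v : G.V | g v = 0} hH g) ∧
        (G.quot {v : G.V | g v = 0} hH).traceNorm (G.gtilde {v : G.V | g v = 0} hH g) =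
          G.traceNorm g :=
  ⟨hg.hereditary_zero, hg.quot_isGraphTrace _ fun _ hv => hv,
    hg.traceNorm_gtilde _ fun _ hv => hv⟩
end

section
/- Let G be a directed graph, let g be a bounded graph trace on G (i.e., ‖g‖ := Σ_{v∈G⁰} g(v) < ∞), and suppose every vertex of G lying on a loop is left infinite. Let H := {v ∈ G⁰ : g(v) = 0}. Then the quotient graph G_{(H,∅)} contains no loops. -/
/-
A graph trace does not increase along edges, so `g ≥ g v` on `L(v)`; if `v` is left infinite and
`g v > 0`, then `‖g‖ ≥ ∑_{w ∈ L(v)} g v = ∞`. Hence a bounded trace vanishes on every left infinite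
vertex, in particular on every vertex lying on a loop. A loop in the quotient graph projects to a
loop in `G` through vertices outside `H = {g = 0}`, which is impossible.
-/

namespace DirGraph

variable {G : DirGraph} {g : G.V → NNReal}

theorem IsGraphTrace.apply_r_le_apply_s (hg : G.IsGraphTrace g) (e : G.E) :
    g (G.r e) ≤ g (G.s e) := by
  by_cases hfin : {e' : G.E | G.s e' = G.s e}.Finite
  · rw [hg.1 (G.s e) hfin ⟨e, rfl⟩, ← hfin.coe_toFinset, finsum_mem_coe_finset]
    exact Finset.single_le_sum (f := fun e' => g (G.r e')) (fun _ _ => zero_le)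
      (hfin.mem_toFinset.mpr rfl)
  · simpa using hg.2 (G.s e) hfin {e} (by simp)

theorem IsGraphTrace.antitone_of_reaches (hg : G.IsGraphTrace g) {w v : G.V}
    (h : G.Reaches w v) : g v ≤ g w := by
  induction h with
  | refl => exact le_rfl
  | tail _ step ih =>
    obtain ⟨e, rfl, rfl⟩ := step
    exact (hg.apply_r_le_apply_s e).trans ih

theorem IsGraphTrace.hereditary_zeroSet (hg : G.IsGraphTrace g) :
    G.Hereditary {v | g v = 0} := fun e he =>
  le_antisymm ((hg.apply_r_le_apply_s e).trans_eq he) zero_le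

theorem IsGraphTrace.eq_zero_of_leftInfinite (hg : G.IsGraphTrace g)
    (hbdd : G.traceNorm g < ⊤) {v : G.V} (hv : G.LeftInfinite v) : g v = 0 := by
  by_contra hne
  have : Infinite (G.L v) := hv.to_subtype
  refine hbdd.ne (top_le_iff.mp ?_)
  calc (⊤ : ENNReal) = ∑' _ : G.L v, (g v : ENNReal) :=
        (ENNReal.tsum_const_eq_top_of_ne_zero (by exact_mod_cast hne)).symm
    _ ≤ ∑' w : G.L v, (g w : ENNReal) :=
        ENNReal.tsum_le_tsum fun w => by exact_mod_cast hg.antitone_of_reaches w.2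
    _ ≤ G.traceNorm g := ENNReal.tsum_comp_le_tsum_of_injective Subtype.val_injective _

theorem Reaches.map {G' : DirGraph} (f : G.V → G'.V) (φ : G.E → G'.E)
    (hs : ∀ e, G'.s (φ e) = f (G.s e)) (hr : ∀ e, G'.r (φ e) = f (G.r e)) {v w : G.V}
    (h : G.Reaches v w) : G'.Reaches (f v) (f w) := by
  induction h with
  | refl => exact .refl
  | tail _ step ih =>
    obtain ⟨e, rfl, rfl⟩ := step
    exact ih.tail ⟨φ e, hs e, hr e⟩

theorem OnLoop.map {G' : DirGraph} (f : G.V → G'.V) (φ : G.E → G'.E)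
    (hs : ∀ e, G'.s (φ e) = f (G.s e)) (hr : ∀ e, G'.r (φ e) = f (G.r e)) {v : G.V}
    (h : G.OnLoop v) : G'.OnLoop (f v) := by
  obtain ⟨e, rfl, hreach⟩ := h
  exact ⟨φ e, hs e, hr e ▸ hreach.map f φ hs hr⟩

variable {H : Set G.V} {hH : G.Hereditary H}

def quotProjV : (G.quot H hH).V → G.V := Sum.elim Subtype.val Subtype.val

def quotProjE : (G.quot H hH).E → G.E := Sum.elim Subtype.val Subtype.val

theorem s_quotProjE (e : (G.quot H hH).E) :
    G.s (quotProjE e) = quotProjV ((G.quot H hH).s e) := by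
  rcases e with e | e <;> rfl

theorem r_quotProjE (e : (G.quot H hH).E) :
    G.r (quotProjE e) = quotProjV ((G.quot H hH).r e) := by
  rcases e with e | e <;> rfl

theorem quotProjV_notMem (v : (G.quot H hH).V) : quotProjV v ∉ H := by
  rcases v with v | ⟨v, -, -, e, rfl, he⟩
  · exact v.2
  · exact fun hv => he (hH e hv)

theorem OnLoop.quotProjV {v : (G.quot H hH).V} (h : (G.quot H hH).OnLoop v) :
    G.OnLoop (quotProjV v) :=
  h.map _ quotProjE (fun e => s_quotProjE e) (fun e => r_quotProjE e)

end DirGraph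

/-- If `g` is a bounded graph trace on `G`, every vertex of `G` lying on a loop is left
infinite, and `H = {v : g v = 0}`, then the quotient graph `G_{(H,∅)}` has no loops. -/
theorem quot_no_loops (G : DirGraph) (g : G.V → NNReal)
    (hg : G.IsGraphTrace g) (hbdd : G.traceNorm g < ⊤)
    (hloops : ∀ v : G.V, G.OnLoop v → G.LeftInfinite v) :
    ∃ hH : G.Hereditary {v : G.V | g v = 0},
      ∀ v : (G.quot {v : G.V | g v = 0} hH).V,
        ¬ (G.quot {v : G.V | g v = 0} hH).OnLoop v :=
  ⟨hg.hereditary_zeroSet, fun v hv =>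
    DirGraph.quotProjV_notMem v <|
      hg.eq_zero_of_leftInfinite hbdd (hloops _ hv.quotProjV)⟩
end

section
/- Let A be a C*-algebra and let (pₙ)_{n∈ℕ} be an increasing approximate unit for A consisting of projections; that is, each pₙ is a projection, pₙ pₘ = pₙ whenever n ≤ m, and ‖pₙ a − a‖ → 0 for every a ∈ A. Then the following are equivalent: (ii) for every projection p ∈ A there exists a projection q ∈ A with p ∼ q and pq = 0; (iii) for every n ∈ ℕ there exists m > n and an element v ∈ A with v v* = pₙ and v* v ≤ pₘ − pₙ. -/
/-!
If `r` is a projection and `y = y r` with `‖r - y⋆y‖ < 1`, then `X = 1 - r + y⋆y` is a positive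
unit of the unitization commuting with `r`, so `w = y X^{-1/2}` satisfies `w⋆w = r` and lies in
`y A⁺¹`. With `y = g e` this shows that a projection `e` with `‖g e - e‖ < 1` is subequivalent to
the projection `g`; with `y = (1 - q) z` it replaces a partial isometry `z` with `‖q z‖ < 1` by one
with the same source and range orthogonal to `q`.

For (ii) ⇒ (iii), the projection equivalent and orthogonal to `pₙ` is almost under `pₘ`, hence
almost under `pₘ - pₙ`. For (iii) ⇒ (ii), a projection `q` with `pₙ q ≈ q` is subequivalent to `pₙ`,
hence to a subprojection of `pₘ - pₙ`; that subprojection is almost orthogonal to `q`, and the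
second perturbation makes it orthogonal.
-/

open scoped CStarAlgebra

theorem IsStarProjection.mul_star_self_of_mul_star_mul_self {R : Type*} [Semigroup R] [StarMul R]
    {b : R} (h : b * star b * b = b) : IsStarProjection (b * star b) where
  isIdempotentElem := by rw [IsIdempotentElem, ← mul_assoc, h]
  isSelfAdjoint := IsSelfAdjoint.mul_star_self b

theorem IsStarProjection.exists_star_mul_self_eq_of_norm_sub_lt_one {B : Type*} [CStarAlgebra B]
    [PartialOrder B] [StarOrderedRing B] {r y : B} (hr : IsStarProjection r) (hyr : y * r = y)
    (hy : ‖r - star y * y‖ < 1) :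
    ∃ c : B, star (y * c) * (y * c) = r ∧ y * c * r = y * c := by
  obtain ⟨X, hX⟩ : ∃ X : Bˣ, (X : B) = 1 - r + star y * y :=
    ⟨Units.oneSub _ hy, by rw [Units.val_oneSub]; abel⟩
  have hXr : X * r = star y * y := by
    rw [hX, add_mul, sub_mul, one_mul, hr.isIdempotentElem.eq, sub_self, zero_add, mul_assoc, hyr]
  have hrX : r * X = star y * y := by
    rw [hX, mul_add, mul_sub, mul_one, hr.isIdempotentElem.eq, sub_self, zero_add, ← mul_assoc,
      ← hr.isSelfAdjoint.star_eq, ← star_mul, hyr]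
  have hXpos : IsStrictlyPositive (X : B) := X.isStrictlyPositive_of_le <| by
    rw [hX]; exact add_nonneg hr.one_sub_nonneg (star_mul_self_nonneg y)
  have hcr : Commute ((X : B) ^ (-(1 / 2) : ℝ)) r := by
    rw [CFC.rpow_def]; exact Commute.cfc_nnreal (hXr.trans hrX.symm) _
  set c : B := (X : B) ^ (-(1 / 2) : ℝ)
  have hc : star c = c := CFC.rpow_nonneg.isSelfAdjoint.star_eq
  refine ⟨c, ?_, ?_⟩
  · calc star (y * c) * (y * c) = c * (X * r) * c := by
          rw [hXr, star_mul, hc]; simp only [mul_assoc]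
      _ = c * X * c * r := by simp only [mul_assoc, hcr.eq]
      _ = r := by rw [CFC.conjugate_rpow_neg_one_half (X : B) hXpos, one_mul]
  · rw [mul_assoc, hcr.eq, ← mul_assoc, hyr]

section NonUnital

variable {A : Type*} [NonUnitalCStarAlgebra A]

theorem IsStarProjection.exists_inr_eq_mul_of_norm_sub_lt_one {r y : A} (hr : IsStarProjection r)
    (hyr : y * r = y) (hy : ‖r - star y * y‖ < 1) :
    ∃ b : A, star b * b = r ∧ b * r = b ∧ ∃ c : A⁺¹, (b : A⁺¹) = y * c := by
  obtain ⟨c, hc, hcr⟩ := hr.inr.exists_star_mul_self_eq_of_norm_sub_lt_one (y := (y : A⁺¹))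
    (by rw [← Unitization.inr_mul, hyr])
    (by rwa [← Unitization.inr_star, ← Unitization.inr_mul, ← Unitization.inr_sub,
      Unitization.norm_inr])
  have hb : (((y : A⁺¹) * c).snd : A⁺¹) = y * c := Unitization.ext (by simp) rfl
  refine ⟨((y : A⁺¹) * c).snd, ?_, ?_, c, hb⟩ <;> apply Unitization.inr_injective (R := ℂ)
  · rwa [Unitization.inr_mul, Unitization.inr_star, hb]
  · rwa [Unitization.inr_mul, hb]

theorem norm_le_one_of_star_mul_self_eq {z r : A} (hr : IsStarProjection r)
    (hz : star z * z = r) : ‖z‖ ≤ 1 := by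
  have h := CStarRing.norm_star_mul_self (x := z)
  rw [hz] at h
  nlinarith [hr.norm_le, norm_nonneg z]

theorem IsStarProjection.exists_star_mul_self_eq_of_norm_mul_sub_lt_one {e g : A}
    (he : IsStarProjection e) (hg : IsStarProjection g) (h : ‖g * e - e‖ < 1) :
    ∃ b : A, star b * b = e ∧ b * e = b ∧ g * b = b := by
  have hye : g * e * e = g * e := by rw [mul_assoc, he.isIdempotentElem.eq]
  have hyy : e - star (g * e) * (g * e) = e * (e - g * e) := by
    rw [star_mul, he.isSelfAdjoint.star_eq, hg.isSelfAdjoint.star_eq, mul_sub,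
      he.isIdempotentElem.eq, mul_assoc, ← mul_assoc g, hg.isIdempotentElem.eq]
  obtain ⟨b, hbb, hbe, c, hb⟩ := he.exists_inr_eq_mul_of_norm_sub_lt_one hye <| by
    calc ‖e - star (g * e) * (g * e)‖ ≤ ‖e‖ * ‖e - g * e‖ := hyy ▸ norm_mul_le _ _
      _ ≤ 1 * ‖g * e - e‖ := by rw [norm_sub_rev]; gcongr; exact he.norm_le
      _ < 1 := by rwa [one_mul]
  refine ⟨b, hbb, hbe, Unitization.inr_injective (R := ℂ) ?_⟩
  rw [Unitization.inr_mul, hb, ← mul_assoc, ← Unitization.inr_mul, ← mul_assoc,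
    hg.isIdempotentElem.eq]

theorem IsStarProjection.exists_star_mul_self_eq_of_norm_mul_lt_one {r q z : A}
    (hr : IsStarProjection r) (hz : star z * z = r) (hzr : z * r = z) (hq : IsStarProjection q)
    (h : ‖q * z‖ < 1) : ∃ b : A, star b * b = r ∧ b * r = b ∧ q * b = 0 := by
  have hyr : (z - q * z) * r = z - q * z := by rw [sub_mul, mul_assoc, hzr]
  have hyy : r - star (z - q * z) * (z - q * z) = star (q * z) * (q * z) := by
    simp only [star_sub, star_mul, hq.isSelfAdjoint.star_eq, sub_mul, mul_sub, ← hz]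
    simp only [mul_assoc, ← mul_assoc q q, hq.isIdempotentElem.eq]
    abel
  obtain ⟨b, hbb, hbr, c, hb⟩ := hr.exists_inr_eq_mul_of_norm_sub_lt_one hyr <| by
    rw [hyy, CStarRing.norm_star_mul_self]
    nlinarith [norm_nonneg (q * z)]
  refine ⟨b, hbb, hbr, Unitization.inr_injective (R := ℂ) ?_⟩
  rw [Unitization.inr_mul, hb, ← mul_assoc, ← Unitization.inr_mul, mul_sub, ← mul_assoc,
    hq.isIdempotentElem.eq, sub_self, Unitization.inr_zero, zero_mul]

end NonUnital

section NonUnitalOrdered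

variable {A : Type*} [NonUnitalCStarAlgebra A] [PartialOrder A] [StarOrderedRing A]

theorem mul_eq_self_of_star_mul_self_le {v g : A} (hg : IsStarProjection g) (hv : star v * v ≤ g) :
    v * g = v := by
  have ⟨hvg, hgv⟩ := hg.mul_right_and_mul_left_of_nonneg_of_le (star_mul_self_nonneg v) hv
  have : star (v - v * g) * (v - v * g) = 0 := calc
    _ = star v * v - star v * v * g - g * (star v * v) + g * (star v * v) * g := by
      simp only [star_sub, star_mul, hg.isSelfAdjoint.star_eq]; noncomm_ring
    _ = 0 := by rw [hvg, hgv, hvg]; abel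
  rw [CStarRing.star_mul_self_eq_zero_iff, sub_eq_zero] at this
  exact this.symm

theorem exists_mul_star_self_eq_and_star_mul_self_le {e e' g v : A} (he : IsStarProjection e)
    (he' : IsStarProjection e') (hg : IsStarProjection g) (hv : e = v * star v)
    (hv' : e' = star v * v) (h : ‖g * e' - e'‖ < 1) :
    ∃ w : A, w * star w = e ∧ star w * w ≤ g := by
  subst hv hv'
  obtain ⟨b, hbb, hbe, hgb⟩ := he'.exists_star_mul_self_eq_of_norm_mul_sub_lt_one hg h
  refine ⟨v * star b, ?_, ?_⟩
  · calc v * star b * star (v * star b) = v * (star b * b) * star v := by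
          rw [star_mul, star_star]; simp only [mul_assoc]
      _ = v * star v := by rw [hbb]; simpa only [mul_assoc] using he.isIdempotentElem.eq
  · have hb : b * star b * b = b := by rw [mul_assoc, hbb, hbe]
    calc star (v * star b) * (v * star b) = b * (star v * v) * star b := by
          rw [star_mul, star_star]; simp only [mul_assoc]
      _ = b * star b := by rw [hbe]
      _ ≤ g := (IsStarProjection.mul_star_self_of_mul_star_mul_self hb).le_of_mul_eq_right hg
          (by rw [← mul_assoc, hgb])

theorem exists_orthogonal_equiv_of_subequiv {q e g v : A} (hq : IsStarProjection q)
    (he : IsStarProjection e) (hg : IsStarProjection g) (heg : e * g = 0)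
    (hv : v * star v = e) (hvg : star v * v ≤ g) (h : ‖e * q - q‖ < 1) :
    ∃ q' : A, IsStarProjection q' ∧ (∃ w : A, q = w * star w ∧ q' = star w * w) ∧ q * q' = 0 := by
  obtain ⟨b, hbb, hbq, heb⟩ := hq.exists_star_mul_self_eq_of_norm_mul_sub_lt_one he h
  have hgv : g * star v = star v := by
    simpa [hg.isSelfAdjoint.star_eq] using congr(star $(mul_eq_self_of_star_mul_self_le hg hvg))
  have hz : star (star v * b) * (star v * b) = q := calc
    _ = star b * (v * star v) * b := by rw [star_mul, star_star]; simp only [mul_assoc]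
    _ = q := by rw [hv, mul_assoc, heb, hbb]
  have hqz : ‖q * (star v * b)‖ < 1 := calc
    ‖q * (star v * b)‖ = ‖(q - q * e) * g * (star v * b)‖ := by
      rw [sub_mul, mul_assoc q e, heg, mul_zero, sub_zero, mul_assoc, ← mul_assoc g, hgv]
    _ ≤ ‖q - q * e‖ * ‖g‖ * ‖star v * b‖ := by
      grw [norm_mul_le, norm_mul_le]
    _ ≤ ‖q - q * e‖ * 1 * 1 := by
      gcongr
      exacts [hg.norm_le, norm_le_one_of_star_mul_self_eq hq hz]
    _ < 1 := by
      rwa [mul_one, mul_one, ← norm_star, star_sub, star_mul, hq.isSelfAdjoint.star_eq,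
        he.isSelfAdjoint.star_eq, norm_sub_rev]
  obtain ⟨b', hb'b', hb'q, hqb'⟩ := hq.exists_star_mul_self_eq_of_norm_mul_lt_one hz
    (by rw [mul_assoc, hbq]) hq hqz
  have hb' : b' * star b' * b' = b' := by rw [mul_assoc, hb'b', hb'q]
  exact ⟨b' * star b', .mul_star_self_of_mul_star_mul_self hb',
    ⟨star b', by rw [star_star, hb'b'], by rw [star_star]⟩, by rw [← mul_assoc, hqb', zero_mul]⟩

end NonUnitalOrdered

/-- Let `A` be a C⋆-algebra with an increasing countable approximate unit `(pₙ)`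
consisting of projections.  Then every projection of `A` is equivalent to an orthogonal
projection if and only if for every `n` there is `m > n` with `pₙ ≲ pₘ - pₙ`. -/
theorem exists_orthogonal_equiv_iff_approxUnit_subequiv
    {A : Type*} [NonUnitalCStarAlgebra A] [PartialOrder A] [StarOrderedRing A]
    (p : ℕ → A)
    (hproj : ∀ n : ℕ, IsSelfAdjoint (p n) ∧ p n * p n = p n)
    (hincr : ∀ n m : ℕ, n ≤ m → p n * p m = p n)
    (happrox : ∀ a : A,
      Filter.Tendsto (fun n : ℕ => ‖p n * a - a‖) Filter.atTop (nhds 0)) :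
    (∀ q : A, IsSelfAdjoint q → q * q = q →
        ∃ q' : A, (IsSelfAdjoint q' ∧ q' * q' = q') ∧
          (∃ v : A, q = v * star v ∧ q' = star v * v) ∧ q * q' = 0) ↔
      (∀ n : ℕ, ∃ m : ℕ, n < m ∧
        ∃ v : A, v * star v = p n ∧ star v * v ≤ p m - p n) := by
  have hp (n : ℕ) : IsStarProjection (p n) := ⟨(hproj n).2, (hproj n).1⟩
  have hsub {n m : ℕ} (h : n < m) : IsStarProjection (p m - p n) :=
    (hp n).sub_of_mul_eq_left (hp m) (hincr n m h.le)
  constructor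
  · intro h n
    obtain ⟨q', ⟨hq'sa, hq'⟩, ⟨v, hv, hv'⟩, horth⟩ := h (p n) (hproj n).1 (hproj n).2
    obtain ⟨m, hnm, hm⟩ := ((Filter.eventually_gt_atTop n).and
      ((happrox q').eventually (gt_mem_nhds one_pos))).exists
    refine ⟨m, hnm, exists_mul_star_self_eq_and_star_mul_self_le (hp n) ⟨hq', hq'sa⟩ (hsub hnm)
      hv hv' ?_⟩
    rwa [sub_mul, horth, sub_zero]
  · intro h q hqsa hq
    obtain ⟨n, hn⟩ := ((happrox q).eventually (gt_mem_nhds one_pos)).exists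
    obtain ⟨m, hnm, v, hv, hvg⟩ := h n
    obtain ⟨q', hq', hequiv, horth⟩ := exists_orthogonal_equiv_of_subequiv ⟨hq, hqsa⟩ (hp n)
      (hsub hnm) (by rw [mul_sub, hincr n m hnm.le, (hproj n).2, sub_self]) hv hvg hn
    exact ⟨q', ⟨hq'.isSelfAdjoint, hq'.isIdempotentElem⟩, hequiv, horth⟩
end

section
/- Let A be a C*-algebra and let p, q ∈ A be projections. Then there exists a sequence (xₖ) in A with ‖xₖ* q xₖ − p‖ → 0 if and only if there exists v ∈ A with p = v v* and v* v ≤ q. -/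
/-!
If `p = v v*` then `v` is a partial isometry, so `v* v` is a projection below `q` and the constant
sequence `x = v*` gives `x* q x = v q v* = p` exactly.

Conversely, if `‖x* q x - p‖ < 1` for one `x`, then `w = p x* q` has `w w*` within distance `1`
of `p` in the corner `pAp`, so `w w*` is invertible there with a positive inverse `c`. The
normalized element `v = √c w` then satisfies `v v* = p`, and `v* v` is a projection with
`v* v q = v* v`, i.e. a subprojection of `q`.
-/

section NonUnitalCStarAlgebra

variable {A : Type*} [NonUnitalCStarAlgebra A]

lemma isQuasiregular_neg_of_norm_lt_one {y : A} (hy : ‖y‖ < 1) : IsQuasiregular (-y) := by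
  by_contra h
  have hmem : (1 : NNReal) ∈ quasispectrum NNReal y :=
    quasispectrum.mem_of_not_quasiregular (r := 1) y (by simpa using h)
  exact (CStarAlgebra.le_nnnorm_of_mem_quasispectrum hmem).not_gt (by exact_mod_cast hy)

/-- Witness: `c = p + z`, where `z` is the quasi-inverse of `b - p`. -/
lemma exists_mul_eq_self_and_mul_eq_of_norm_sub_lt_one {p b : A} (hp : IsIdempotentElem p)
    (hpb : p * b = b) (hbp : b * p = b) (h : ‖p - b‖ < 1) : ∃ c, c * p = c ∧ c * b = p := by
  obtain ⟨z, -, hzq⟩ := isQuasiregular_iff.mp (isQuasiregular_neg_of_norm_lt_one h)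
  have hz : z = (p - b) + z * (p - b) := by rw [← sub_eq_zero, ← hzq]; noncomm_ring
  have hzp : z * p = z := by rw [hz, add_mul, mul_assoc, sub_mul, hp.eq, hbp]
  have hzb : z * b = p - b :=
    calc z * b = z * p - z * (p - b) := by noncomm_ring
      _ = p - b := by rw [hzp]; nth_rewrite 1 [hz]; abel
  refine ⟨p + z, by rw [add_mul, hp.eq, hzp], ?_⟩
  rw [add_mul, hpb, hzb, add_sub_cancel]

lemma mul_star_self_mul_eq_self_of_isIdempotentElem {v : A}
    (h : IsIdempotentElem (v * star v)) : v * star v * v = v := by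
  refine (sub_eq_zero.mp ((CStarRing.mul_star_self_eq_zero_iff _).mp ?_)).symm
  have : (v - v * star v * v) * star (v - v * star v * v) =
      v * star v - v * star v * (v * star v) - (v * star v * (v * star v) -
        v * star v * (v * star v) * (v * star v)) := by
    simp only [star_sub, star_mul, star_star]; noncomm_ring
  simp only [this, h.eq, sub_self]

lemma isStarProjection_star_mul_self_of_isIdempotentElem {v : A}
    (h : IsIdempotentElem (v * star v)) : IsStarProjection (star v * v) where
  isIdempotentElem := by
    rw [IsIdempotentElem, mul_assoc, ← mul_assoc v,
      mul_star_self_mul_eq_self_of_isIdempotentElem h]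
  isSelfAdjoint := .star_mul_self v

variable [PartialOrder A] [StarOrderedRing A]

lemma CFC.sqrt_mul_eq_self_of_mul_eq_self {c e : A}
    (hc : 0 ≤ c) (he : IsSelfAdjoint e) (hce : c * e = c) :
    CFC.sqrt c * e = CFC.sqrt c := by
  set s := CFC.sqrt c
  have hss : s * s = c := CFC.sqrt_mul_sqrt_self c
  have hs : star s = s := (CFC.sqrt_nonneg c).isSelfAdjoint.star_eq
  have hec : e * c = c := by
    simpa [he.star_eq, hc.isSelfAdjoint.star_eq] using congr(star $hce)
  refine (sub_eq_zero.mp ((CStarRing.star_mul_self_eq_zero_iff _).mp ?_)).symm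
  calc star (s - s * e) * (s - s * e) = s * s - s * s * e - e * (s * s) + e * (s * s) * e := by
        rw [star_sub, star_mul, hs, he.star_eq]; noncomm_ring
    _ = 0 := by rw [hss, hce, hec, hce]; abel

lemma mul_mul_star_eq_of_star_mul_self_le {p q v : A} (hp : IsIdempotentElem p)
    (hq : IsStarProjection q) (hpv : p = v * star v) (hle : star v * v ≤ q) :
    v * q * star v = p := by
  have hvq : star v * v * q = star v * v :=
    (hq.mul_right_and_mul_left_of_nonneg_of_le (star_mul_self_nonneg v) hle).1
  have hv : v * star v * v = v := mul_star_self_mul_eq_self_of_isIdempotentElem (hpv ▸ hp)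
  calc v * q * star v = v * star v * v * q * star v := by rw [hv]
    _ = v * (star v * v * q) * star v := by noncomm_ring
    _ = p := by rw [hvq, ← mul_assoc, hv, hpv]

/-- Witness: `s = √c`, where `c` is the inverse of `w w*` in the corner `pAp`. -/
lemma exists_mul_left_mul_star_self_eq_of_norm_sub_lt_one {p w : A} (hp : IsStarProjection p)
    (hpw : p * w = w) (h : ‖p - w * star w‖ < 1) :
    ∃ s, s * w * star (s * w) = p := by
  set b := w * star w
  have hbsa : IsSelfAdjoint b := .mul_star_self w
  have hpb : p * b = b := by rw [← mul_assoc, hpw]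
  have hbp : b * p = b := by
    simpa [hp.isSelfAdjoint.star_eq, hbsa.star_eq] using congr(star $hpb)
  obtain ⟨c, hcp, hcb⟩ := exists_mul_eq_self_and_mul_eq_of_norm_sub_lt_one hp.isIdempotentElem
    hpb hbp h
  have hstar_c : star c = c * w * star (c * w) := by
    rw [star_mul, ← mul_assoc, mul_assoc c, hcb, ← hp.isSelfAdjoint.star_eq, ← star_mul, hcp]
  have hc : 0 ≤ c := by
    simpa using (hstar_c ▸ mul_star_self_nonneg (c * w) : 0 ≤ star c)
  have hbc : b * c = p := by
    simpa [hp.isSelfAdjoint.star_eq, hbsa.star_eq, hc.isSelfAdjoint.star_eq] using congr(star $hcb)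
  set s := CFC.sqrt c
  have hss : s * s = c := CFC.sqrt_mul_sqrt_self c
  have hsp : s * p = s := CFC.sqrt_mul_eq_self_of_mul_eq_self hc hp.isSelfAdjoint hcp
  have hsbsc : s * b * s * c = c :=
    calc s * b * s * c = s * (b * c) * s := by rw [← hss]; noncomm_ring
      _ = c := by rw [hbc, hsp, hss]
  refine ⟨s, ?_⟩
  calc s * w * star (s * w) = s * b * s * p := by
        rw [star_mul, (CFC.sqrt_nonneg c).isSelfAdjoint.star_eq, mul_assoc (s * b), hsp]
        simp only [b]; noncomm_ring
    _ = p := by rw [← hcb, ← mul_assoc, hsbsc, hcb]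

lemma exists_mul_star_self_eq_and_star_mul_self_le_of_norm_sub_lt_one {p q x : A}
    (hp : IsStarProjection p) (hq : IsStarProjection q) (hx : ‖star x * q * x - p‖ < 1) :
    ∃ v, p = v * star v ∧ star v * v ≤ q := by
  set w := p * star x * q
  have hww : w * star w = p * (star x * q * x) * p := by
    calc w * star w = p * star x * (q * q) * x * p := by
          simp only [w, star_mul, star_star, hp.isSelfAdjoint.star_eq, hq.isSelfAdjoint.star_eq]
          noncomm_ring
      _ = p * (star x * q * x) * p := by rw [hq.isIdempotentElem.eq]; noncomm_ring
  have hnorm : ‖p - w * star w‖ < 1 :=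
    calc ‖p - w * star w‖ = ‖p * (p - star x * q * x) * p‖ := by
          rw [hww, mul_sub, sub_mul, hp.isIdempotentElem.eq, hp.isIdempotentElem.eq]
      _ ≤ ‖p‖ * ‖p - star x * q * x‖ * ‖p‖ := norm_mul₃_le
      _ ≤ 1 * ‖p - star x * q * x‖ * 1 := by
          gcongr <;> exact hp.norm_le
      _ < 1 := by rwa [one_mul, mul_one, norm_sub_rev]
  obtain ⟨s, hs⟩ := exists_mul_left_mul_star_self_eq_of_norm_sub_lt_one hp
    (by rw [← mul_assoc, ← mul_assoc, hp.isIdempotentElem.eq]) hnorm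
  refine ⟨s * w, hs.symm, ?_⟩
  have hproj : IsStarProjection (star (s * w) * (s * w)) :=
    isStarProjection_star_mul_self_of_isIdempotentElem (hs ▸ hp.isIdempotentElem)
  rw [hproj.le_iff_mul_eq_left hq, mul_assoc, mul_assoc, mul_assoc, hq.isIdempotentElem.eq]

end NonUnitalCStarAlgebra

/-- For projections `p, q` in a C⋆-algebra, `p` is Cuntz subequivalent to `q` (i.e.
`xₖ* q xₖ → p` for some sequence `(xₖ)`) if and only if `p` is equivalent to a
subprojection of `q`. -/
theorem cuntz_subequiv_iff_subprojection
    {A : Type*} [NonUnitalCStarAlgebra A] [PartialOrder A] [StarOrderedRing A]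
    (p q : A) (hp : IsSelfAdjoint p ∧ p * p = p) (hq : IsSelfAdjoint q ∧ q * q = q) :
    (∃ x : ℕ → A, Filter.Tendsto (fun k : ℕ => ‖star (x k) * q * x k - p‖)
        Filter.atTop (nhds 0)) ↔
      ∃ v : A, p = v * star v ∧ star v * v ≤ q := by
  have hp' : IsStarProjection p := ⟨hp.2, hp.1⟩
  have hq' : IsStarProjection q := ⟨hq.2, hq.1⟩
  constructor
  · rintro ⟨x, hx⟩
    obtain ⟨k, hk⟩ := (hx.eventually (gt_mem_nhds one_pos)).exists
    exact exists_mul_star_self_eq_and_star_mul_self_le_of_norm_sub_lt_one hp' hq' hk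
  · rintro ⟨v, hpv, hle⟩
    refine ⟨fun _ => star v, ?_⟩
    simp only [star_star, mul_mul_star_eq_of_star_mul_self_le hp.2 hq' hpv hle, sub_self,
      norm_zero, tendsto_const_nhds]
end
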